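/- arXiv:1608.01010 — 6 statements merged into one kernel-verified Lean document; each statement's English description precedes it below -/
import Mathlib

section
/- For every nonzero complex number p with e^{-p/2^k} ≠ -1 for all k ≥ 1 and e^{-p} ≠ 1, one has 1/p = 1/(1 - e^{-p}) - ∑_{k=1}^∞ 2^{-k}/(1 + e^{-p/2^k}), where the series converges. -/
/-!
Since `exp (-p / 2 ^ (k + 1))` squares to `exp (-p / 2 ^ k)`, the identity
`1 / (1 + z) = 2 / (1 - z ^ 2) - 1 / (1 - z)` makes the `k`-th term the difference of consecutive
values of `a n = 1 / (2 ^ n * (1 - exp (-p / 2 ^ n)))`, so the series telescopes to `a 0 - lim a`.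
The limit is `1 / p` because `2 ^ n * (1 - exp (-p / 2 ^ n)) → p`, the derivative of `exp` at `0`
being `1`. The terms are `O(2⁻ᵏ)`, so the series converges absolutely.
-/

open Complex Filter Finset Topology Asymptotics

namespace Complex

lemma exp_div_two_pow_pow (z : ℂ) (n : ℕ) : exp (z / 2 ^ n) ^ 2 ^ n = exp z := by
  rw [← exp_nat_mul]
  congr 1
  field_simp
  push_cast
  ring

lemma exp_div_two_pow_succ_sq (z : ℂ) (k : ℕ) :
    exp (z / 2 ^ (k + 1)) ^ 2 = exp (z / 2 ^ k) := by
  rw [← exp_nat_mul]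
  congr 1
  field_simp
  push_cast
  ring

lemma tendsto_div_two_pow_atTop (z : ℂ) : Tendsto (fun n : ℕ => z / 2 ^ n) atTop (𝓝 0) := by
  have h : Tendsto (fun n : ℕ => (2⁻¹ : ℂ) ^ n) atTop (𝓝 0) :=
    tendsto_pow_atTop_nhds_zero_of_norm_lt_one (by norm_num)
  simpa [div_eq_mul_inv, inv_pow] using h.const_mul z

lemma tendsto_two_pow_mul_one_sub_exp (p : ℂ) :
    Tendsto (fun n : ℕ => 2 ^ n * (1 - exp (-p / 2 ^ n))) atTop (𝓝 p) := by
  have hslope : ContinuousAt (dslope exp 0) 0 :=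
    continuousAt_dslope_same.mpr differentiableAt_exp
  have hlim : Tendsto (fun n : ℕ => p * dslope exp 0 (-p / 2 ^ n)) atTop (𝓝 p) := by
    simpa [dslope_same] using
      (hslope.tendsto.comp (tendsto_div_two_pow_atTop (-p))).const_mul p
  refine hlim.congr fun n => ?_
  have h := sub_smul_dslope exp 0 (-p / 2 ^ n)
  simp only [sub_zero, smul_eq_mul, exp_zero] at h
  have h2 : (2 : ℂ) ^ n * (-p / 2 ^ n) = -p := mul_div_cancel₀ _ (pow_ne_zero _ two_ne_zero)
  linear_combination (-(2 : ℂ) ^ n) * h + dslope exp 0 (-p / 2 ^ n) * h2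

end Complex

lemma summable_div_one_add_exp_div_two_pow (p : ℂ) :
    Summable fun k : ℕ => (1 / 2 ^ (k + 1) : ℂ) / (1 + exp (-p / 2 ^ (k + 1))) := by
  have hden : Tendsto (fun k : ℕ => (1 + exp (-p / 2 ^ (k + 1)))⁻¹) atTop (𝓝 2⁻¹) := by
    have h := ((continuous_exp.tendsto 0).comp
      ((tendsto_div_two_pow_atTop (-p)).comp (tendsto_add_atTop_nat 1))).const_add 1
    rw [exp_zero, one_add_one_eq_two] at h
    exact h.inv₀ two_ne_zero
  have hgeom : (fun k : ℕ => (1 / 2 ^ (k + 1) : ℂ)) =O[atTop] fun k => (1 : ℝ) / 2 / 2 ^ k :=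
    isBigO_of_le _ fun k => by simp [pow_succ, div_eq_mul_inv, mul_comm]
  refine summable_of_isBigO_nat (summable_geometric_two' 1) ?_
  simpa [div_eq_mul_inv] using hgeom.mul (hden.isBigO_one ℝ)

noncomputable def dyadicApprox (p : ℂ) (n : ℕ) : ℂ := 1 / (2 ^ n * (1 - exp (-p / 2 ^ n)))

lemma dyadicApprox_zero (p : ℂ) : dyadicApprox p 0 = 1 / (1 - exp (-p)) := by
  simp [dyadicApprox]

lemma tendsto_dyadicApprox {p : ℂ} (hp : p ≠ 0) :
    Tendsto (dyadicApprox p) atTop (𝓝 (1 / p)) := by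
  rw [one_div]
  exact ((tendsto_two_pow_mul_one_sub_exp p).inv₀ hp).congr fun n => (one_div _).symm

lemma dyadicApprox_sub_succ {p : ℂ} {k : ℕ} (hm : exp (-p / 2 ^ (k + 1)) ≠ -1)
    (h1 : exp (-p / 2 ^ (k + 1)) ≠ 1) :
    dyadicApprox p k - dyadicApprox p (k + 1) =
      1 / 2 ^ (k + 1) / (1 + exp (-p / 2 ^ (k + 1))) := by
  rw [dyadicApprox, dyadicApprox, ← exp_div_two_pow_succ_sq]
  set z := exp (-p / 2 ^ (k + 1))
  have hsub : 1 - z ≠ 0 := sub_ne_zero.mpr h1.symm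
  have hadd : 1 + z ≠ 0 := by
    rw [add_comm, ← sub_neg_eq_add]
    exact sub_ne_zero.mpr hm
  have hsq : 1 - z ^ 2 ≠ 0 := by
    rw [show 1 - z ^ 2 = (1 - z) * (1 + z) by ring]
    exact mul_ne_zero hsub hadd
  field_simp
  ring

theorem dyadic_decomposition (p : ℂ) (hp : p ≠ 0)
    (h : ∀ k : ℕ, 1 ≤ k → Complex.exp (-p / 2 ^ k) ≠ -1)
    (h' : Complex.exp (-p) ≠ 1) :
    HasSum (fun k : ℕ => (1 / 2 ^ (k + 1) : ℂ) / (1 + Complex.exp (-p / 2 ^ (k + 1))))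
      (1 / (1 - Complex.exp (-p)) - 1 / p) := by
  have hne : ∀ n : ℕ, exp (-p / 2 ^ n) ≠ 1 := fun n h1 =>
    h' (by rw [← exp_div_two_pow_pow _ n, h1, one_pow])
  have htel : ∀ n, ∑ k ∈ range n, (1 / 2 ^ (k + 1) : ℂ) / (1 + exp (-p / 2 ^ (k + 1))) =
      dyadicApprox p 0 - dyadicApprox p n := fun n => by
    rw [← sum_range_sub']
    exact sum_congr rfl fun k _ => (dyadicApprox_sub_succ (h _ k.succ_pos) (hne _)).symm
  rw [(summable_div_one_add_exp_div_two_pow p).hasSum_iff_tendsto_nat, funext htel,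
    ← dyadicApprox_zero]
  exact tendsto_const_nhds.sub (tendsto_dyadicApprox hp)
end

section
/- Let β ≠ 0 and s ≠ p be complex numbers. Then 1/(s - p) = -β e^{-βs}/(e^{-βs} - e^{-βp}) + ∑_{k=1}^∞ β 2^{-k} e^{-2^{-k}βs}/(e^{-2^{-k}βs} + e^{-2^{-k}βp}), provided no denominator vanishes, with convergence of the series. -/
/-!
With `u k = exp (a / 2 ^ k)` and `v k = exp (b / 2 ^ k)` we have `u k = u (k + 1) ^ 2`, hence
`u k - v k = (u (k + 1) - v (k + 1)) * (u (k + 1) + v (k + 1))`, and the `k`-th term of the series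
is `g k - g (k + 1)` for `g k = u k / (u k - v k) / 2 ^ k`. The series telescopes to `g 0 - lim g`,
and `lim g = 1 / (a - b)` because `2 ^ k * (u k - v k) → a - b` (the derivative of
`t ↦ exp (a t) - exp (b t)` at `0`). Taking `a = -β s`, `b = -β p` and multiplying by `β` gives the
Cauchy kernel.
-/

open Filter Topology Asymptotics

theorem RCLike.tendsto_inv_two_pow_nhdsNE_zero {𝕜 : Type*} [RCLike 𝕜] :
    Tendsto (fun n : ℕ => ((2 : 𝕜) ^ n)⁻¹) atTop (𝓝[≠] 0) := by
  refine tendsto_nhdsWithin_of_tendsto_nhds_of_eventually_within _ ?_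
    (.of_forall fun n => by simp)
  simpa [← inv_pow] using tendsto_pow_atTop_nhds_zero_of_norm_lt_one (x := (2 : 𝕜)⁻¹)
    (by simp; norm_num)

theorem HasDerivAt.tendsto_two_pow_mul_sub {𝕜 : Type*} [RCLike 𝕜] {f : 𝕜 → 𝕜} {f' : 𝕜}
    (hf : HasDerivAt f f' 0) :
    Tendsto (fun n : ℕ => 2 ^ n * (f (2 ^ n)⁻¹ - f 0)) atTop (𝓝 f') := by
  refine (hf.tendsto_slope_zero.comp RCLike.tendsto_inv_two_pow_nhdsNE_zero).congr fun n => ?_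
  simp

theorem Complex.tendsto_two_pow_mul_exp_div_two_pow_sub_exp (a b : ℂ) :
    Tendsto (fun n : ℕ => 2 ^ n * (exp (a / 2 ^ n) - exp (b / 2 ^ n))) atTop (𝓝 (a - b)) := by
  have hexp (c : ℂ) : HasDerivAt (fun t => exp (c * t)) c 0 := by
    simpa using ((hasDerivAt_id 0).const_mul c).cexp
  have hf := (hexp a).sub (hexp b)
  simpa [div_eq_mul_inv] using hf.tendsto_two_pow_mul_sub

theorem Complex.exp_div_two_pow_ne_exp_div_two_pow {a b : ℂ} (h : exp a ≠ exp b) (k : ℕ) :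
    exp (a / 2 ^ k) ≠ exp (b / 2 ^ k) := by
  have hpow (z : ℂ) : exp (z / 2 ^ k) ^ 2 ^ k = exp z := by
    rw [← exp_nat_mul]; push_cast; field_simp
  intro hk
  exact h (by rw [← hpow a, ← hpow b, hk])

theorem Complex.exp_div_two_pow_succ_sq_s4 (z : ℂ) (k : ℕ) :
    exp (z / 2 ^ (k + 1)) ^ 2 = exp (z / 2 ^ k) := by
  rw [← exp_nat_mul, pow_succ]
  congr 1
  push_cast
  field_simp

theorem div_add_div_two_mul_eq_sub {K : Type*} [Field K] [NeZero (2 : K)] {a b : K}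
    (h : a ^ 2 ≠ b ^ 2) (w : K) :
    a / (a + b) / (2 * w) = a ^ 2 / (a ^ 2 - b ^ 2) / w - a / (a - b) / (2 * w) := by
  have hsub : a - b ≠ 0 := fun h' => h (by rw [sub_eq_zero.mp h'])
  have hadd : a + b ≠ 0 := fun h' => h (by rw [eq_neg_of_add_eq_zero_left h', neg_sq])
  rcases eq_or_ne w 0 with rfl | hw
  · simp
  rw [sq_sub_sq]
  field_simp
  ring

theorem summable_div_two_pow_of_tendsto {f : ℕ → ℂ} {l : ℂ} (hf : Tendsto f atTop (𝓝 l)) :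
    Summable (fun k => f k / 2 ^ k) := by
  have hgeom : Summable (fun k : ℕ => ((2 : ℂ) ^ k)⁻¹) := by
    simpa [← inv_pow] using summable_geometric_of_norm_lt_one (x := (2 : ℂ)⁻¹) (by simp; norm_num)
  refine summable_of_isBigO_nat' hgeom ?_
  simpa [div_eq_mul_inv] using
    (hf.isBigO_one ℂ).mul (isBigO_refl (fun k : ℕ => ((2 : ℂ) ^ k)⁻¹) atTop)

theorem hasSum_sub_succ_of_tendsto {G : Type*} [TopologicalSpace G] [AddCommGroup G]
    [IsTopologicalAddGroup G] [T2Space G] {f : ℕ → G} {l : G}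
    (hs : Summable (fun n => f n - f (n + 1))) (hf : Tendsto f atTop (𝓝 l)) :
    HasSum (fun n => f n - f (n + 1)) (f 0 - l) := by
  rw [hs.hasSum_iff_tendsto_nat]
  simpa only [Finset.sum_range_sub'] using tendsto_const_nhds.sub hf

theorem Complex.hasSum_exp_div_two_pow_div_add {a b : ℂ} (h : exp a ≠ exp b) :
    HasSum (fun k : ℕ => exp (a / 2 ^ (k + 1)) / (exp (a / 2 ^ (k + 1)) + exp (b / 2 ^ (k + 1)))
      / 2 ^ (k + 1)) (exp a / (exp a - exp b) - 1 / (a - b)) := by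
  set g : ℕ → ℂ := fun n => exp (a / 2 ^ n) / (exp (a / 2 ^ n) - exp (b / 2 ^ n)) / 2 ^ n
  have htel (k : ℕ) : exp (a / 2 ^ (k + 1)) / (exp (a / 2 ^ (k + 1)) + exp (b / 2 ^ (k + 1)))
      / 2 ^ (k + 1) = g k - g (k + 1) := by
    have hsq := exp_div_two_pow_ne_exp_div_two_pow h k
    rw [← exp_div_two_pow_succ_sq_s4 a, ← exp_div_two_pow_succ_sq_s4 b] at hsq
    have := div_add_div_two_mul_eq_sub hsq (2 ^ k)
    rwa [← pow_succ', exp_div_two_pow_succ_sq_s4, exp_div_two_pow_succ_sq_s4] at this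
  have hlim0 (z : ℂ) : Tendsto (fun n : ℕ => exp (z / 2 ^ n)) atTop (𝓝 1) := by
    simpa [div_eq_mul_inv] using
      ((RCLike.tendsto_inv_two_pow_nhdsNE_zero.mono_right nhdsWithin_le_nhds).const_mul z).cexp
  have hab : a - b ≠ 0 := sub_ne_zero.mpr fun hab' => h (hab' ▸ rfl)
  have hg : Tendsto g atTop (𝓝 (1 / (a - b))) := by
    refine ((hlim0 a).div (tendsto_two_pow_mul_exp_div_two_pow_sub_exp a b) hab).congr fun n => ?_
    simp only [g, Pi.div_apply, div_div, mul_comm]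
  have hs : Summable (fun k : ℕ =>
      exp (a / 2 ^ (k + 1)) / (exp (a / 2 ^ (k + 1)) + exp (b / 2 ^ (k + 1))) / 2 ^ (k + 1)) :=
    (summable_nat_add_iff 1).mpr <| summable_div_two_pow_of_tendsto <|
      (hlim0 a).div ((hlim0 a).add (hlim0 b)) (by norm_num)
  simp_rw [htel] at hs ⊢
  simpa [g] using hasSum_sub_succ_of_tendsto hs hg

theorem dyadic_Cauchy_kernel_general (β s p : ℂ)
    (h0 : Complex.exp (-β * s) ≠ Complex.exp (-β * p)) :
    HasSum
      (fun k : ℕ =>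
        β * (1 / 2 ^ (k + 1) : ℂ) * Complex.exp (-β * s / 2 ^ (k + 1))
          / (Complex.exp (-β * s / 2 ^ (k + 1)) + Complex.exp (-β * p / 2 ^ (k + 1))))
      (1 / (s - p) + β * Complex.exp (-β * s) / (Complex.exp (-β * s) - Complex.exp (-β * p))) := by
  have hβ : β ≠ 0 := by rintro rfl; simp at h0
  have hsp : s - p ≠ 0 := sub_ne_zero.mpr (by rintro rfl; exact h0 rfl)
  have hsum := (Complex.hasSum_exp_div_two_pow_div_add h0).mul_left β
  have hval : β * (Complex.exp (-β * s) / (Complex.exp (-β * s) - Complex.exp (-β * p))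
      - 1 / (-β * s - -β * p))
      = 1 / (s - p) + β * Complex.exp (-β * s) / (Complex.exp (-β * s) - Complex.exp (-β * p)) := by
    rw [show -β * s - -β * p = -β * (s - p) by ring]
    field_simp
    ring
  rw [hval] at hsum
  simpa only [mul_div_assoc, mul_assoc, one_div_mul_eq_div, div_right_comm] using hsum

theorem dyadic_Cauchy_kernel (β s p : ℂ) (hβ : β ≠ 0) (hps : p ≠ s)
    (h0 : Complex.exp (-β * s) ≠ Complex.exp (-β * p))
    (h : ∀ k : ℕ, 1 ≤ k →
      Complex.exp (-β * s / 2 ^ k) + Complex.exp (-β * p / 2 ^ k) ≠ 0) :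
    HasSum
      (fun k : ℕ =>
        β * (1 / 2 ^ (k + 1) : ℂ) * Complex.exp (-β * s / 2 ^ (k + 1))
          / (Complex.exp (-β * s / 2 ^ (k + 1)) + Complex.exp (-β * p / 2 ^ (k + 1))))
      (1 / (s - p) + β * Complex.exp (-β * s) / (Complex.exp (-β * s) - Complex.exp (-β * p))) :=
  dyadic_Cauchy_kernel_general β s p h0
end

section
/- For real x > 0, Ψ(x+1) - ln x = ∑_{k=1}^∞ ∫_0^∞ e^{-q(1 + 2^k x)}/(1 + e^{-q}) dq, with the series of integrals converging. -/
/-!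
Write `g p = 1 / p - 1 / (exp p - 1)`. The duplication formula
`g p = (exp (p / 2) + 1)⁻¹ / 2 + g (p / 2) / 2` telescopes to the dyadic expansion of `g`, and the
substitution `q = p / 2 ^ (k + 1)` turns the `k`-th integral into the Laplace transform at `x` of
the `k`-th dyadic term. As `0 ≤ g ≤ 1` on `(0, ∞)`, the remainders are at most `2⁻ᴷ / x`, so the
series sums to `G x = ∫₀^∞ exp (-x p) g p dp`.

By Frullani's integral, `G x - G (x + 1) = log (x + 1) - log x - 1 / (x + 1)`, which is also the
increment of `Ψ (x + 1) - log x`. Their difference is thus `1`-periodic; it tends to `0` because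
both lie in `[0, 1 / x]` (for `Ψ` by the log-convexity of `Γ`), so it vanishes.
-/

open MeasureTheory

noncomputable def digammaR (x : ℝ) : ℝ := deriv Real.Gamma x / Real.Gamma x

open Real Set Filter Topology Finset

noncomputable def digammaKernel (p : ℝ) : ℝ := 1 / p - 1 / (exp p - 1)

lemma digammaKernel_nonneg {p : ℝ} (hp : 0 < p) : 0 ≤ digammaKernel p := by
  have : p < exp p - 1 := by linarith [add_one_lt_exp hp.ne']
  rw [digammaKernel, sub_nonneg]
  gcongr

lemma digammaKernel_le_one {p : ℝ} (hp : 0 < p) : digammaKernel p ≤ 1 := by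
  have hE : 0 < exp p - 1 := by linarith [add_one_lt_exp hp.ne']
  have h : exp p * (1 - p) ≤ 1 :=
    calc exp p * (1 - p) ≤ exp p * exp (-p) := by gcongr; linarith [add_one_le_exp (-p)]
      _ = 1 := by rw [← exp_add, add_neg_cancel, exp_zero]
  rw [digammaKernel, div_sub_div _ _ hp.ne' hE.ne', div_le_one (by positivity)]
  linarith
lemma abs_digammaKernel_le_one {p : ℝ} (hp : 0 < p) : |digammaKernel p| ≤ 1 :=
  abs_le.mpr ⟨by linarith [digammaKernel_nonneg hp], digammaKernel_le_one hp⟩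

lemma digammaKernel_eq_half_add {p : ℝ} (hp : p ≠ 0) :
    digammaKernel p = 2⁻¹ * (exp (p / 2) + 1)⁻¹ + 2⁻¹ * digammaKernel (p / 2) := by
  have h1 : exp (p / 2) - 1 ≠ 0 := by
    rw [sub_ne_zero, Ne, exp_eq_one_iff]; simpa using hp
  have h2 : exp (p / 2) + 1 ≠ 0 := by positivity
  have hfac : exp p - 1 = (exp (p / 2) - 1) * (exp (p / 2) + 1) := by
    rw [mul_comm, ← mul_self_sub_one, ← exp_add, add_halves]
  rw [digammaKernel, digammaKernel, hfac]
  field_simp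
  ring

lemma sum_range_dyadic_eq_digammaKernel_sub {p : ℝ} (hp : p ≠ 0) (K : ℕ) :
    ∑ k ∈ range K, ((2 : ℝ) ^ (k + 1))⁻¹ * (exp (p / 2 ^ (k + 1)) + 1)⁻¹
      = digammaKernel p - ((2 : ℝ) ^ K)⁻¹ * digammaKernel (p / 2 ^ K) := by
  induction K with
  | zero => simp
  | succ K ih =>
    rw [sum_range_succ, ih, digammaKernel_eq_half_add (p := p / 2 ^ K) (by positivity), div_div,
      ← pow_succ]
    ring

section Laplace

variable {x C : ℝ} {h : ℝ → ℝ}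

lemma integral_exp_neg_mul_Ioi (hx : 0 < x) : ∫ p in Ioi (0 : ℝ), exp (-x * p) = x⁻¹ := by
  rw [integral_exp_mul_Ioi (neg_neg_of_pos hx), mul_zero, exp_zero, neg_div, div_neg, neg_neg,
    one_div]

lemma integrableOn_exp_neg_mul_mul_of_abs_le (hx : 0 < x)
    (hm : AEStronglyMeasurable h (volume.restrict (Ioi 0))) (hC : ∀ p ∈ Ioi (0 : ℝ), |h p| ≤ C) :
    IntegrableOn (fun p => exp (-x * p) * h p) (Ioi 0) :=
  (exp_neg_integrableOn_Ioi 0 hx).mul_bdd hm ((ae_restrict_iff' measurableSet_Ioi).mpr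
    (Eventually.of_forall hC))

lemma setIntegral_exp_neg_mul_mul_nonneg (h0 : ∀ p ∈ Ioi (0 : ℝ), 0 ≤ h p) :
    0 ≤ ∫ p in Ioi (0 : ℝ), exp (-x * p) * h p :=
  setIntegral_nonneg measurableSet_Ioi fun p hp => mul_nonneg (exp_pos _).le (h0 p hp)

lemma setIntegral_exp_neg_mul_mul_le_inv (hx : 0 < x)
    (hm : AEStronglyMeasurable h (volume.restrict (Ioi 0)))
    (h0 : ∀ p ∈ Ioi (0 : ℝ), 0 ≤ h p) (h1 : ∀ p ∈ Ioi (0 : ℝ), h p ≤ 1) :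
    ∫ p in Ioi (0 : ℝ), exp (-x * p) * h p ≤ x⁻¹ := by
  rw [← integral_exp_neg_mul_Ioi hx]
  refine setIntegral_mono_on (integrableOn_exp_neg_mul_mul_of_abs_le (C := 1) hx hm fun p hp => ?_)
    (exp_neg_integrableOn_Ioi 0 hx) measurableSet_Ioi fun p hp => ?_
  · rw [abs_of_nonneg (h0 p hp)]; exact h1 p hp
  · exact mul_le_of_le_one_right (exp_pos _).le (h1 p hp)

end Laplace

lemma integral_exp_neg_mul_div_one_add_exp_neg {c : ℝ} (hc : 0 < c) (x : ℝ) :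
    ∫ q in Ioi (0 : ℝ), exp (-q * (1 + c * x)) / (1 + exp (-q))
      = ∫ p in Ioi (0 : ℝ), exp (-x * p) * (c⁻¹ * (exp (p / c) + 1)⁻¹) := by
  have hsubst := integral_comp_mul_right_Ioi'
    (fun q => exp (-q * (1 + c * x)) / (1 + exp (-q))) 0 (inv_pos.mpr hc)
  rw [zero_mul] at hsubst
  rw [← hsubst, smul_eq_mul, ← integral_const_mul]
  congr 1 with p
  have h : exp (-(p * c⁻¹) * (1 + c * x)) = exp (-x * p) * exp (-(p / c)) := by
    rw [← exp_add]; congr 1; field_simp; ring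
  rw [h, ← div_eq_mul_inv, exp_neg]
  field_simp

noncomputable def laplaceDigammaKernel (x : ℝ) : ℝ :=
  ∫ p in Ioi (0 : ℝ), exp (-x * p) * digammaKernel p

lemma integrableOn_exp_neg_mul_mul_digammaKernel_div {x c : ℝ} (hx : 0 < x) (hc : 0 < c) :
    IntegrableOn (fun p => exp (-x * p) * digammaKernel (p / c)) (Ioi 0) :=
  integrableOn_exp_neg_mul_mul_of_abs_le hx (by unfold digammaKernel; fun_prop)
    fun _ hp => abs_digammaKernel_le_one (div_pos hp hc)

lemma integrableOn_exp_neg_mul_mul_digammaKernel {x : ℝ} (hx : 0 < x) :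
    IntegrableOn (fun p => exp (-x * p) * digammaKernel p) (Ioi 0) := by
  simpa only [div_one] using integrableOn_exp_neg_mul_mul_digammaKernel_div hx one_pos

lemma laplaceDigammaKernel_nonneg (x : ℝ) : 0 ≤ laplaceDigammaKernel x :=
  setIntegral_exp_neg_mul_mul_nonneg fun _ hp => digammaKernel_nonneg hp

lemma laplaceDigammaKernel_le_inv {x : ℝ} (hx : 0 < x) : laplaceDigammaKernel x ≤ x⁻¹ :=
  setIntegral_exp_neg_mul_mul_le_inv hx (by unfold digammaKernel; fun_prop)
    (fun _ hp => digammaKernel_nonneg hp) (fun _ hp => digammaKernel_le_one hp)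

lemma sum_range_dyadic_integral_eq_laplaceDigammaKernel_sub {x : ℝ} (hx : 0 < x) (K : ℕ) :
    ∑ k ∈ range K, ∫ q in Ioi (0 : ℝ), exp (-q * (1 + 2 ^ (k + 1) * x)) / (1 + exp (-q))
      = laplaceDigammaKernel x
        - ((2 : ℝ) ^ K)⁻¹ * ∫ p in Ioi (0 : ℝ), exp (-x * p) * digammaKernel (p / 2 ^ K) := by
  have hterm (k : ℕ) : IntegrableOn
      (fun p => exp (-x * p) * (((2 : ℝ) ^ (k + 1))⁻¹ * (exp (p / 2 ^ (k + 1)) + 1)⁻¹)) (Ioi 0) :=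
    integrableOn_exp_neg_mul_mul_of_abs_le (C := 1) hx (by fun_prop) fun p _ => by
      rw [abs_of_pos (by positivity)]
      exact mul_le_one₀ (inv_le_one_of_one_le₀ (one_le_pow₀ one_le_two)) (by positivity)
        (inv_le_one_of_one_le₀ (by linarith [exp_pos (p / 2 ^ (k + 1))]))
  simp_rw [integral_exp_neg_mul_div_one_add_exp_neg (pow_pos two_pos _)]
  rw [← integral_finsetSum _ fun k _ => hterm k, laplaceDigammaKernel, ← integral_const_mul,
    ← integral_sub (integrableOn_exp_neg_mul_mul_digammaKernel hx)
      ((integrableOn_exp_neg_mul_mul_digammaKernel_div hx (pow_pos two_pos K)).const_mul _)]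
  refine setIntegral_congr_fun measurableSet_Ioi fun p hp => ?_
  rw [← mul_sum, sum_range_dyadic_eq_digammaKernel_sub (ne_of_gt hp)]
  ring

lemma hasSum_dyadic_integral_laplaceDigammaKernel {x : ℝ} (hx : 0 < x) :
    HasSum (fun k : ℕ => ∫ q in Ioi (0 : ℝ), exp (-q * (1 + 2 ^ (k + 1) * x)) / (1 + exp (-q)))
      (laplaceDigammaKernel x) := by
  refine (hasSum_iff_tendsto_nat_of_nonneg (fun k => setIntegral_nonneg measurableSet_Ioi
    fun q _ => by positivity) _).mpr ?_
  simp_rw [sum_range_dyadic_integral_eq_laplaceDigammaKernel_sub hx]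
  suffices hrem : Tendsto (fun K : ℕ => ((2 : ℝ) ^ K)⁻¹ *
      ∫ p in Ioi (0 : ℝ), exp (-x * p) * digammaKernel (p / 2 ^ K)) atTop (𝓝 0) by
    simpa using hrem.const_sub (laplaceDigammaKernel x)
  have hgeom : Tendsto (fun K : ℕ => ((2 : ℝ) ^ K)⁻¹ * x⁻¹) atTop (𝓝 0) := by
    simpa using (tendsto_inv_atTop_zero.comp
      (tendsto_pow_atTop_atTop_of_one_lt one_lt_two)).mul_const x⁻¹
  refine squeeze_zero (fun K => mul_nonneg (by positivity) ?_) (fun K => ?_) hgeom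
  · exact setIntegral_exp_neg_mul_mul_nonneg fun p hp =>
      digammaKernel_nonneg (div_pos hp (by positivity))
  · gcongr
    exact setIntegral_exp_neg_mul_mul_le_inv hx (by unfold digammaKernel; fun_prop)
      (fun p hp => digammaKernel_nonneg (div_pos hp (by positivity)))
      (fun p hp => digammaKernel_le_one (div_pos hp (by positivity)))

section Digamma

variable {y : ℝ}

lemma digammaR_eq_deriv_log_Gamma (hy : 0 < y) : digammaR y = deriv (log ∘ Gamma) y := by
  rw [digammaR, Function.comp_def,
    deriv.log (differentiableAt_Gamma fun m => by linarith) (Gamma_pos_of_pos hy).ne']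

lemma log_Gamma_add_one (hy : 0 < y) : log (Gamma (y + 1)) = log (Gamma y) + log y := by
  rw [Gamma_add_one hy.ne', log_mul hy.ne' (Gamma_pos_of_pos hy).ne', add_comm]

lemma differentiableAt_log_Gamma (hy : 0 < y) : DifferentiableAt ℝ (log ∘ Gamma) y :=
  (differentiableAt_Gamma fun m => by linarith).log (Gamma_pos_of_pos hy).ne'

lemma digammaR_add_one (hy : 0 < y) : digammaR (y + 1) = digammaR y + y⁻¹ := by
  rw [digammaR_eq_deriv_log_Gamma hy, digammaR_eq_deriv_log_Gamma (by linarith),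
    ← deriv_comp_add_const, ← deriv_log,
    ← deriv_add (differentiableAt_log_Gamma hy) (differentiableAt_log hy.ne')]
  refine EventuallyEq.deriv_eq ?_
  filter_upwards [eventually_gt_nhds hy] with t ht using log_Gamma_add_one ht

lemma slope_log_Gamma (hy : 0 < y) : slope (log ∘ Gamma) y (y + 1) = log y := by
  rw [slope_def_field, add_sub_cancel_left, div_one, Function.comp_apply, Function.comp_apply,
    log_Gamma_add_one hy, add_sub_cancel_left]

lemma digammaR_le_log (hy : 0 < y) : digammaR y ≤ log y := by
  rw [digammaR_eq_deriv_log_Gamma hy, ← slope_log_Gamma hy]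
  exact convexOn_log_Gamma.deriv_le_slope hy (by positivity : 0 < y + 1) (by linarith)
    (differentiableAt_log_Gamma hy)

lemma log_le_digammaR_add_one (hy : 0 < y) : log y ≤ digammaR (y + 1) := by
  rw [digammaR_eq_deriv_log_Gamma (by linarith), ← slope_log_Gamma hy]
  exact convexOn_log_Gamma.slope_le_deriv hy (by positivity : 0 < y + 1) (by linarith)
    (differentiableAt_log_Gamma (by linarith))

end Digamma

lemma laplaceDigammaKernel_sub_add_one {x : ℝ} (hx : 0 < x) :
    laplaceDigammaKernel x - laplaceDigammaKernel (x + 1)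
      = log (x + 1) - log x - (x + 1)⁻¹ := by
  have hx1 : 0 < x + 1 := by linarith
  have hG := integrableOn_exp_neg_mul_mul_digammaKernel hx
  have hG1 := integrableOn_exp_neg_mul_mul_digammaKernel hx1
  have hexp := exp_neg_integrableOn_Ioi 0 hx1
  have hpoint : ∀ p ∈ Ioi (0 : ℝ),
      exp (-x * p) * digammaKernel p - exp (-(x + 1) * p) * digammaKernel p
        = p⁻¹ • (exp (-(x * p)) - exp (-((x + 1) * p))) - exp (-(x + 1) * p) := by
    intro p (hp : 0 < p)
    have hE : exp p - 1 ≠ 0 := by linarith [add_one_lt_exp (ne_of_gt hp)]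
    have hsplit : exp (-(x + 1) * p) = exp (-x * p) * exp (-p) := by rw [← exp_add]; ring_nf
    rw [smul_eq_mul, ← neg_mul, ← neg_mul, hsplit, digammaKernel, exp_neg]
    field_simp
  have hfrullani : IntegrableOn
      (fun p => p⁻¹ • (exp (-(x * p)) - exp (-((x + 1) * p)))) (Ioi 0) :=
    ((hG.sub hG1).add hexp).congr_fun
      (fun p hp => by simp only [Pi.add_apply, Pi.sub_apply]; rw [hpoint p hp]; ring)
      measurableSet_Ioi
  rw [laplaceDigammaKernel, laplaceDigammaKernel, ← integral_sub hG hG1,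
    setIntegral_congr_fun measurableSet_Ioi hpoint, integral_sub hfrullani hexp,
    integral_exp_neg_mul_Ioi hx1,
    Frullani.integral_Ioi_eq (f := fun t => exp (-t)) (L := 1) (R := 0)
      ((continuous_exp.comp continuous_neg).locallyIntegrable.locallyIntegrableOn _) hx hx1 ?_ ?_
      hfrullani, smul_eq_mul, sub_zero, mul_one, log_div hx1.ne' hx.ne']
  · exact ((continuous_exp.comp continuous_neg).tendsto' 0 1 (by simp)).mono_left
      nhdsWithin_le_nhds
  · simpa using tendsto_exp_neg_atTop_nhds_zero

lemma eq_zero_of_add_one_eq_of_tendsto_atTop {D : ℝ → ℝ} {x : ℝ} (hx : 0 < x)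
    (hper : ∀ y, 0 < y → D (y + 1) = D y) (hlim : Tendsto D atTop (𝓝 0)) : D x = 0 := by
  have hshift (n : ℕ) : D (x + n) = D x := by
    induction n with
    | zero => simp
    | succ n ih => rw [Nat.cast_succ, ← add_assoc, hper _ (by positivity), ih]
  refine tendsto_nhds_unique (f := fun _ : ℕ => D x) (l := atTop) tendsto_const_nhds ?_
  exact (hlim.comp (tendsto_atTop_add_const_left _ x tendsto_natCast_atTop_atTop)).congr
    fun n => hshift n

lemma laplaceDigammaKernel_eq_digammaR_sub_log {x : ℝ} (hx : 0 < x) :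
    laplaceDigammaKernel x = digammaR (x + 1) - log x := by
  set D : ℝ → ℝ := fun y => digammaR (y + 1) - log y - laplaceDigammaKernel y with hD
  have hper (y : ℝ) (hy : 0 < y) : D (y + 1) = D y := by
    have := digammaR_add_one (by linarith : 0 < y + 1)
    have := laplaceDigammaKernel_sub_add_one hy
    simp only [hD]
    linarith
  have hbound (y : ℝ) (hy : 0 < y) : ‖D y‖ ≤ y⁻¹ := by
    have := log_le_digammaR_add_one hy
    have := digammaR_le_log hy
    have := digammaR_add_one hy
    have := laplaceDigammaKernel_nonneg y
    have := laplaceDigammaKernel_le_inv hy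
    rw [Real.norm_eq_abs, abs_le]
    simp only [hD]
    constructor <;> linarith
  have hlim : Tendsto D atTop (𝓝 0) :=
    squeeze_zero_norm' ((eventually_gt_atTop 0).mono hbound) tendsto_inv_atTop_zero
  linarith [eq_zero_of_add_one_eq_of_tendsto_atTop hx hper hlim]

theorem digamma_dyadic_integral_series (x : ℝ) (hx : 0 < x) :
    HasSum
      (fun k : ℕ =>
        ∫ q in Set.Ioi (0 : ℝ), Real.exp (-q * (1 + 2 ^ (k + 1) * x)) / (1 + Real.exp (-q)))
      (digammaR (x + 1) - Real.log x) := by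
  rw [← laplaceDigammaKernel_eq_digammaR_sub_log hx]
  exact hasSum_dyadic_integral_laplaceDigammaKernel hx
end

section
/- Let A be a bounded self-adjoint positive operator on a Hilbert space with 0 ∉ σ(A) (i.e., A ≥ c > 0), and let T_t = e^{-tA}. Then A^{-1} = (1 - T_1)^{-1} - ∑_{k=1}^∞ 2^{-k} (1 + T_{1/2^k})^{-1}, with the series converging in operator norm. -/
open NormedSpace Filter Topology

/-!
For a scalar `x > 0` put `g n = 2⁻ⁿ (1 - e^{-x/2ⁿ})⁻¹`. With `q = e^{-x/2ⁿ⁺¹}`, the identity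
`(1 - q²)⁻¹ = ((1 - q)⁻¹ + (1 + q)⁻¹) / 2` gives `g n - g (n + 1) = 2⁻ⁿ⁻¹ (1 + q)⁻¹`, and
`g n → x⁻¹`, so the dyadic series telescopes to `(1 - e^{-x})⁻¹ - x⁻¹`. Its terms are bounded by
`2⁻ⁿ⁻¹` uniformly in `x`, so it converges uniformly on the spectrum and the continuous functional
calculus transfers the scalar identity to `A`.
-/

lemma Antitone.hasSum_sub_succ {g : ℕ → ℝ} {l : ℝ} (hmono : Antitone g)
    (hg : Tendsto g atTop (𝓝 l)) : HasSum (fun n => g n - g (n + 1)) (g 0 - l) := by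
  rw [hasSum_iff_tendsto_nat_of_nonneg (fun n => sub_nonneg.mpr (hmono n.le_succ))]
  simpa only [Finset.sum_range_sub'] using tendsto_const_nhds.sub hg

lemma one_sub_exp_neg_ne_zero {x : ℝ} (hx : x ≠ 0) : 1 - Real.exp (-x) ≠ 0 := by
  rw [sub_ne_zero, ne_comm, Ne, Real.exp_eq_one_iff, neg_eq_zero]
  exact hx

lemma inv_one_sub_exp_neg_two_mul {y : ℝ} (hy : y ≠ 0) :
    (1 - Real.exp (-(2 * y)))⁻¹ = ((1 - Real.exp (-y))⁻¹ + (1 + Real.exp (-y))⁻¹) / 2 := by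
  have hsq : Real.exp (-(2 * y)) = Real.exp (-y) ^ 2 := by
    rw [← Real.exp_nat_mul]; ring_nf
  have hsub := one_sub_exp_neg_ne_zero hy
  have hadd : 1 + Real.exp (-y) ≠ 0 := by positivity
  rw [hsq, show 1 - Real.exp (-y) ^ 2 = (1 - Real.exp (-y)) * (1 + Real.exp (-y)) by ring]
  field_simp
  ring

lemma tendsto_mul_inv_one_sub_exp_neg :
    Tendsto (fun s : ℝ => s * (1 - Real.exp (-s))⁻¹) (𝓝[≠] 0) (𝓝 1) := by
  have hderiv : HasDerivAt (fun s : ℝ => 1 - Real.exp (-s)) 1 0 := by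
    simpa using ((Real.hasDerivAt_exp (-0)).comp 0 (hasDerivAt_neg 0)).const_sub 1
  have hslope := (hasDerivAt_iff_tendsto_slope.mp hderiv).inv₀ one_ne_zero
  rw [inv_one] at hslope
  refine hslope.congr fun s => ?_
  simp [slope_def_field, div_eq_mul_inv]

lemma tendsto_one_div_two_pow_mul_inv_one_sub_exp {x : ℝ} (hx : 0 < x) :
    Tendsto (fun n : ℕ => 1 / 2 ^ n * (1 - Real.exp (-(1 / 2 ^ n * x)))⁻¹) atTop (𝓝 x⁻¹) := by
  have hscale : Tendsto (fun n : ℕ => 1 / 2 ^ n * x) atTop (𝓝[≠] 0) := by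
    refine tendsto_nhdsWithin_iff.mpr ⟨?_, .of_forall fun n => (by positivity : 1 / 2 ^ n * x ≠ 0)⟩
    simpa [← one_div_pow] using (tendsto_pow_atTop_nhds_zero_of_lt_one
      (by norm_num : (0 : ℝ) ≤ 1 / 2) (by norm_num)).mul_const x
  have := (tendsto_mul_inv_one_sub_exp_neg.comp hscale).const_mul x⁻¹
  rw [mul_one] at this
  refine this.congr fun n => ?_
  simp only [Function.comp_apply]
  field_simp

theorem hasSum_dyadic_inv_one_add_exp {x : ℝ} (hx : 0 < x) :
    HasSum (fun k : ℕ => 1 / 2 ^ (k + 1) * (1 + Real.exp (-(1 / 2 ^ (k + 1) * x)))⁻¹)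
      ((1 - Real.exp (-x))⁻¹ - x⁻¹) := by
  set g : ℕ → ℝ := fun n => 1 / 2 ^ n * (1 - Real.exp (-(1 / 2 ^ n * x)))⁻¹
  have hstep : ∀ n, g n - g (n + 1) =
      1 / 2 ^ (n + 1) * (1 + Real.exp (-(1 / 2 ^ (n + 1) * x)))⁻¹ := by
    intro n
    have hdouble : 1 / 2 ^ n * x = 2 * (1 / 2 ^ (n + 1) * x) := by ring
    simp only [g, hdouble, inv_one_sub_exp_neg_two_mul (by positivity : 1 / 2 ^ (n + 1) * x ≠ 0)]
    ring
  have hmono : Antitone g := antitone_nat_of_succ_le fun n =>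
    sub_nonneg.mp (hstep n ▸ by positivity)
  have hsum := hmono.hasSum_sub_succ (tendsto_one_div_two_pow_mul_inv_one_sub_exp hx)
  simp only [hstep] at hsum
  simpa [g] using hsum

lemma hasSum_cfc_of_norm_le {𝕜 A ι : Type*} {p : A → Prop} [RCLike 𝕜] [Ring A] [StarRing A]
    [TopologicalSpace A] [Algebra 𝕜 A] [ContinuousFunctionalCalculus 𝕜 A p]
    {f : ι → 𝕜 → 𝕜} {u : ι → ℝ} {a : A} (ha : p a) (hf : ∀ i, ContinuousOn (f i) (spectrum 𝕜 a))
    (hu : Summable u) (hfu : ∀ i, ∀ x ∈ spectrum 𝕜 a, ‖f i x‖ ≤ u i) :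
    HasSum (fun i => cfc (f i) a) (cfc (fun x => ∑' i, f i x) a) := by
  have := ContinuousFunctionalCalculus.compactSpace_spectrum (R := 𝕜) (p := p) a
  let F : ι → C(spectrum 𝕜 a, 𝕜) := fun i =>
    ⟨(spectrum 𝕜 a).domRestrict (f i), (hf i).domRestrict⟩
  have hFu : ∀ i, ‖F i‖ ≤ |u i| := fun i =>
    (ContinuousMap.norm_le _ (abs_nonneg _)).mpr fun x => (hfu i x x.2).trans (le_abs_self _)
  have hF : Summable F := hu.abs.of_norm_bounded hFu
  have hcont : ContinuousOn (fun x => ∑' i, f i x) (spectrum 𝕜 a) :=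
    continuousOn_tsum hf hu.abs fun i x hx => (hfu i x hx).trans (le_abs_self _)
  have hsum :
      ∑' i, F i = ⟨(spectrum 𝕜 a).domRestrict (fun x => ∑' i, f i x), hcont.domRestrict⟩ := by
    ext x
    exact (ContinuousMap.tsum_apply hF x).symm
  have hmap := hF.hasSum.map (cfcHom ha) (cfcHom_continuous ha)
  rw [hsum] at hmap
  rw [cfc_apply _ a ha hcont]
  convert hmap using 2 with i
  exact cfc_apply _ a ha (hf i)

section SelfAdjoint

variable {A : Type*} [NormedRing A] [StarRing A] [NormedAlgebra ℝ A]
  [ContinuousFunctionalCalculus ℝ A IsSelfAdjoint]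

lemma ring_inverse_eq_cfc_inv {a : A} (ha : IsSelfAdjoint a) (h0 : 0 ∉ spectrum ℝ a) :
    Ring.inverse a = cfc (fun x : ℝ => x⁻¹) a := by
  rw [cfc_inv (fun x : ℝ => x) a fun x hx => ne_of_mem_of_not_mem hx h0, cfc_id' ℝ a]

variable [StarModule ℝ A]

lemma exp_neg_smul_eq_cfc {a : A} (ha : IsSelfAdjoint a) (t : ℝ) :
    exp (-(t • a)) = cfc (fun x : ℝ => Real.exp (-(t * x))) a := by
  have hta : IsSelfAdjoint (t • a) := .smul (.all t) ha
  calc exp (-(t • a)) = cfc Real.exp (-(t • a)) := (CFC.real_exp_eq_normedSpace_exp hta.neg).symm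
    _ = cfc (fun x : ℝ => Real.exp (-x)) (t • a) := (cfc_comp_neg _ _).symm
    _ = cfc (fun x : ℝ => Real.exp (-(t * x))) a := (cfc_comp_const_mul _ _ _).symm

lemma ring_inverse_one_add_exp_neg_smul_eq_cfc {a : A} (ha : IsSelfAdjoint a) (t : ℝ) :
    Ring.inverse (1 + exp (-(t • a))) = cfc (fun x : ℝ => (1 + Real.exp (-(t * x)))⁻¹) a := by
  rw [exp_neg_smul_eq_cfc ha, ← map_one (algebraMap ℝ A), ← cfc_const_add .., cfc_inv _ _
    fun x _ => by positivity]

lemma ring_inverse_one_sub_exp_neg_eq_cfc {a : A} (ha : IsSelfAdjoint a) (h0 : 0 ∉ spectrum ℝ a) :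
    Ring.inverse (1 - exp (-a)) = cfc (fun x : ℝ => (1 - Real.exp (-x))⁻¹) a := by
  have hne : ∀ x ∈ spectrum ℝ a, 1 - Real.exp (-x) ≠ 0 := fun x hx =>
    one_sub_exp_neg_ne_zero (ne_of_mem_of_not_mem hx h0)
  have hexp := exp_neg_smul_eq_cfc ha 1
  simp only [one_smul, one_mul] at hexp
  rw [hexp, ← cfc_const_one ℝ a, ← cfc_sub (fun _ => 1) (fun x => Real.exp (-x)), cfc_inv _ _ hne]

theorem hasSum_dyadic_resolvent {a : A} (ha : IsSelfAdjoint a)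
    (hpos : ∀ x ∈ spectrum ℝ a, 0 < x) :
    HasSum (fun k : ℕ =>
        (1 / 2 ^ (k + 1) : ℝ) • Ring.inverse (1 + exp (-((1 / 2 ^ (k + 1) : ℝ) • a))))
      (Ring.inverse (1 - exp (-a)) - Ring.inverse a) := by
  have h0 : 0 ∉ spectrum ℝ a := fun h => (hpos 0 h).false
  have hcont : ∀ t : ℝ, Continuous fun x : ℝ => (1 + Real.exp (-(t * x)))⁻¹ := fun t =>
    Continuous.inv₀ (by fun_prop) fun x => (add_pos one_pos (Real.exp_pos _)).ne'
  have hbound : ∀ (k : ℕ) (x : ℝ),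
      ‖1 / 2 ^ (k + 1) * (1 + Real.exp (-(1 / 2 ^ (k + 1) * x)))⁻¹‖ ≤ (1 / 2) ^ (k + 1) := by
    intro k x
    refine (Real.norm_of_nonneg ?_).trans_le ?_
    · positivity
    · rw [one_div_pow]
      exact mul_le_of_le_one_right (by positivity)
        (inv_le_one_of_one_le₀ (le_add_of_nonneg_right (Real.exp_nonneg _)))
  have hsum := hasSum_cfc_of_norm_le ha
    (f := fun k x => 1 / 2 ^ (k + 1) * (1 + Real.exp (-(1 / 2 ^ (k + 1) * x)))⁻¹)
    (fun k => (continuous_const.mul (hcont _)).continuousOn)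
    (summable_geometric_two.comp_injective (add_left_injective 1)) (fun k x _ => hbound k x)
  rw [ring_inverse_one_sub_exp_neg_eq_cfc ha h0, ring_inverse_eq_cfc_inv ha h0,
    ← cfc_sub (fun x : ℝ => (1 - Real.exp (-x))⁻¹) (fun x : ℝ => x⁻¹) a
      ((continuous_const.sub (by fun_prop)).continuousOn.inv₀
        fun x hx => one_sub_exp_neg_ne_zero (hpos x hx).ne')
      (continuousOn_id.inv₀ fun x hx => (hpos x hx).ne')]
  convert hsum using 1
  · funext k
    rw [ring_inverse_one_add_exp_neg_smul_eq_cfc ha, cfc_const_mul _ _ a (hcont _).continuousOn]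
  · exact cfc_congr fun x hx => (hasSum_dyadic_inv_one_add_exp (hpos x hx)).tsum_eq.symm

end SelfAdjoint

theorem dyadic_resolvent_semigroup
    {H : Type*} [NormedAddCommGroup H] [InnerProductSpace ℂ H] [CompleteSpace H]
    (A : H →L[ℂ] H) (hA : IsSelfAdjoint A) (c : ℝ) (hc : 0 < c)
    (hspec : spectrum ℂ A ⊆ Complex.ofReal '' Set.Ici c)
    (T : ℝ → (H →L[ℂ] H)) (hT : ∀ t : ℝ, T t = NormedSpace.exp (-(t • A))) :
    Summable (fun k : ℕ => ((1 : ℝ) / 2 ^ (k + 1)) • Ring.inverse (1 + T (1 / 2 ^ (k + 1)))) ∧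
    Ring.inverse A
      = Ring.inverse (1 - T 1)
        - ∑' k : ℕ, ((1 : ℝ) / 2 ^ (k + 1)) • Ring.inverse (1 + T (1 / 2 ^ (k + 1))) := by
  have hpos : ∀ x ∈ spectrum ℝ A, 0 < x := fun x hx => by
    obtain ⟨y, hy, hyx⟩ := hspec ((spectrum.algebraMap_mem_iff ℂ).mpr hx)
    rw [Complex.coe_algebraMap, Complex.ofReal_inj] at hyx
    exact hc.trans_le (hyx ▸ hy)
  have hsum := hasSum_dyadic_resolvent hA hpos
  simp only [hT, one_smul]
  exact ⟨hsum.summable, by rw [hsum.tsum_eq]; abel⟩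
end

section
/- Let A be a bounded positive self-adjoint operator on a Hilbert space with spectrum in [c,∞), c > 0, and T_t = e^{-tA}. Then A^{-1} = ∑_{j=1}^∞ T_j - lim_{ℓ→∞} ∑_{k=1}^ℓ ∑_{j=1}^∞ 2^{-k}(-1)^j T_{j/2^k}, where all series converge in operator norm. -/
/-!
Write `T t = e^{-tA}` and `D h = h ∑_{j ≥ 1} T (j h)`, a right Riemann sum of `∫₀^∞ T = A⁻¹`.
Since `‖T h‖ ≤ e^{-hc} < 1` for `h > 0`, all series are geometric and converge in norm, and the
first one is `D 1`. Splitting the level-`k` series (`h = 2^{-(k+1)}`, `p = T h`) into even and odd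
terms gives `h ∑ (-p)^j = 2h ∑ p^{2j} - h ∑ p^j = D (2h) - D h`, so the partial sums over `k < ℓ`
telescope to `D 1 - D 2^{-ℓ}`. Finally `D h = T h · (h⁻¹ (1 - T h))⁻¹ → A⁻¹` as `h → 0⁺`: the
difference quotient tends to `A`, the derivative of the semigroup at `0`, and inversion is
continuous at the unit `A`. Hence the limit is `L = D 1 - A⁻¹`.
-/

open NormedSpace Filter Topology

section GeometricSeries

variable {R : Type*} [NormedRing R] [CompleteSpace R] {p : R}

theorem tsum_pow_succ_mul_one_sub (hp : ‖p‖ < 1) : (∑' j : ℕ, p ^ (j + 1)) * (1 - p) = p := by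
  rw [← geom_series_mul_shift p hp, mul_assoc, geom_series_mul_neg p hp, mul_one]

theorem hasSum_neg_pow_succ (hp : ‖p‖ < 1) :
    HasSum (fun j : ℕ => (-p) ^ (j + 1))
      (2 • ∑' j : ℕ, (p ^ 2) ^ (j + 1) - ∑' j : ℕ, p ^ (j + 1)) := by
  set f : ℕ → R := fun j => p ^ (j + 1)
  have hf : Summable f := (summable_nat_add_iff 1).mpr (summable_geometric_of_norm_lt_one hp)
  have he : Summable fun k => f (2 * k) := hf.comp_injective (mul_right_injective₀ two_ne_zero)
  have ho : Summable fun k => f (2 * k + 1) :=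
    hf.comp_injective ((add_left_injective 1).comp (mul_right_injective₀ two_ne_zero))
  have hodd : ∀ k, f (2 * k + 1) = (p ^ 2) ^ (k + 1) := fun k => by
    simp only [f, ← pow_mul]; ring_nf
  have hg : HasSum (fun j => (-p) ^ (j + 1)) (-∑' k, f (2 * k) + ∑' k, f (2 * k + 1)) := by
    refine HasSum.even_add_odd ?_ ?_
    · simpa only [f, fun k => Odd.neg_pow ⟨k, rfl⟩ p] using he.hasSum.neg
    · simpa only [f, fun k : ℕ => Even.neg_pow (n := 2 * k + 1 + 1) ⟨k + 1, by ring⟩ p] using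
        ho.hasSum
  convert hg using 1
  rw [← tsum_even_add_odd he ho, tsum_congr hodd]
  abel

end GeometricSeries

section ExpRiemannSum

variable {𝔸 : Type*} [NormedRing 𝔸] [NormedAlgebra ℝ 𝔸] [CompleteSpace 𝔸]

theorem exp_neg_natCast_mul_smul (n : ℕ) (t : ℝ) (a : 𝔸) :
    exp (-((n * t) • a)) = exp (-(t • a)) ^ n := by
  let : NormedAlgebra ℚ 𝔸 := .restrictScalars ℚ ℝ 𝔸
  rw [mul_smul, ← smul_neg, Nat.cast_smul_eq_nsmul, exp_nsmul]

theorem tendsto_inv_smul_one_sub_exp_neg_smul (a : 𝔸) :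
    Tendsto (fun h : ℝ => h⁻¹ • (1 - exp (-(h • a)))) (𝓝[≠] 0) (𝓝 a) := by
  have := (hasDerivAt_iff_tendsto_slope.mp (hasDerivAt_exp_smul_const (-a) (0 : ℝ))).neg
  rw [zero_smul, exp_zero, one_mul, neg_neg] at this
  refine this.congr fun h => ?_
  rw [slope_def_module, sub_zero, zero_smul, exp_zero, smul_neg, ← smul_neg, neg_sub]

theorem continuous_exp_neg_smul (a : 𝔸) : Continuous fun t : ℝ => exp (-(t • a)) := by
  let : NormedAlgebra ℚ 𝔸 := .restrictScalars ℚ ℝ 𝔸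
  fun_prop

noncomputable def expRiemannSum (a : 𝔸) (h : ℝ) : 𝔸 :=
  h • ∑' j : ℕ, exp (-(h • a)) ^ (j + 1)

theorem hasSum_expRiemannSum {a : 𝔸} {h : ℝ} (hp : ‖exp (-(h • a))‖ < 1) :
    HasSum (fun j : ℕ => h • exp (-((((j : ℝ) + 1) * h) • a))) (expRiemannSum a h) := by
  have hterm : ∀ j : ℕ, exp (-((((j : ℝ) + 1) * h) • a)) = exp (-(h • a)) ^ (j + 1) := fun j => by
    exact_mod_cast exp_neg_natCast_mul_smul (j + 1) h a
  have hs : Summable fun j : ℕ => exp (-(h • a)) ^ (j + 1) :=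
    (summable_nat_add_iff 1).mpr (summable_geometric_of_norm_lt_one hp)
  simpa only [hterm, expRiemannSum] using hs.hasSum.const_smul h

theorem hasSum_expRiemannSum_two_mul_sub {a : 𝔸} {h : ℝ} (hp : ‖exp (-(h • a))‖ < 1) :
    HasSum (fun j : ℕ => ((-1) ^ (j + 1) * h) • exp (-((((j : ℝ) + 1) * h) • a)))
      (expRiemannSum a (2 * h) - expRiemannSum a h) := by
  have hterm : ∀ j : ℕ, ((-1) ^ (j + 1) * h) • exp (-((((j : ℝ) + 1) * h) • a))
      = h • (-exp (-(h • a))) ^ (j + 1) := fun j => by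
    rw [mul_comm, mul_smul, ← neg_one_smul ℝ (exp _), smul_pow, ← exp_neg_natCast_mul_smul]
    push_cast; rfl
  have hsq : exp (-((2 * h) • a)) = exp (-(h • a)) ^ 2 := by
    exact_mod_cast exp_neg_natCast_mul_smul 2 h a
  simp only [hterm, expRiemannSum, hsq]
  convert (hasSum_neg_pow_succ hp).const_smul h using 1
  module

theorem expRiemannSum_mul_inv_smul_one_sub {a : 𝔸} {h : ℝ} (hh : h ≠ 0)
    (hp : ‖exp (-(h • a))‖ < 1) :
    expRiemannSum a h * (h⁻¹ • (1 - exp (-(h • a)))) = exp (-(h • a)) := by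
  rw [expRiemannSum, smul_mul_smul_comm, mul_inv_cancel₀ hh, one_smul,
    tsum_pow_succ_mul_one_sub hp]

theorem tendsto_expRiemannSum {a : 𝔸} (hdecay : ∀ t : ℝ, 0 < t → ‖exp (-(t • a))‖ < 1)
    (ha : IsUnit a) :
    Tendsto (expRiemannSum a) (𝓝[>] 0) (𝓝 (Ring.inverse a)) := by
  set B : ℝ → 𝔸 := fun h => h⁻¹ • (1 - exp (-(h • a)))
  have hB : Tendsto B (𝓝[>] 0) (𝓝 a) :=
    (tendsto_inv_smul_one_sub_exp_neg_smul a).mono_left (nhdsGT_le_nhdsNE 0)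
  have hexp : Tendsto (fun h : ℝ => exp (-(h • a))) (𝓝[>] 0) (𝓝 1) := by
    simpa using ((continuous_exp_neg_smul a).tendsto 0).mono_left nhdsWithin_le_nhds
  have hinv : Tendsto (fun h => Ring.inverse (B h)) (𝓝[>] 0) (𝓝 (Ring.inverse a)) :=
    (ha.unit_spec ▸ NormedRing.inverse_continuousAt ha.unit).tendsto.comp hB
  have heq : (fun h => exp (-(h • a)) * Ring.inverse (B h)) =ᶠ[𝓝[>] 0] expRiemannSum a := by
    filter_upwards [self_mem_nhdsWithin, hB.eventually (Units.isOpen.mem_nhds ha)] with h hh hunit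
    rw [← expRiemannSum_mul_inv_smul_one_sub hh.ne' (hdecay h hh),
      Ring.mul_inverse_cancel_right _ _ hunit]
  simpa using (hexp.mul hinv).congr' heq

end ExpRiemannSum

section SelfAdjoint

variable {A : Type*} [NormedRing A] [StarRing A] [NormedAlgebra ℝ A]
  [StarModule ℝ A] [IsometricContinuousFunctionalCalculus ℝ A IsSelfAdjoint]

theorem norm_exp_neg_smul_le_of_isSelfAdjoint {a : A} (ha : IsSelfAdjoint a) {c t : ℝ}
    (hspec : spectrum ℝ a ⊆ Set.Ici c) (ht : 0 ≤ t) :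
    ‖exp (-(t • a))‖ ≤ Real.exp (-(t * c)) := by
  have hcfc : exp (-(t • a)) = cfc (fun x => Real.exp (-(t * x))) a := by
    rw [← CFC.real_exp_eq_normedSpace_exp ((IsSelfAdjoint.all t).smul ha).neg, ← neg_smul,
      ← cfc_comp_smul (-t) Real.exp a]
    simp only [neg_mul, smul_eq_mul]
  rw [hcfc]
  refine norm_cfc_le (Real.exp_nonneg _) fun x hx => ?_
  rw [Real.norm_of_nonneg (Real.exp_nonneg _)]
  exact Real.exp_le_exp.2 (by nlinarith [Set.mem_Ici.mp (hspec hx)])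

end SelfAdjoint

theorem spectrum_real_subset_of_subset_image_ofReal {B : Type*} [Ring B] [Algebra ℂ B]
    [Algebra ℝ B] [IsScalarTower ℝ ℂ B] {b : B} {s : Set ℝ}
    (h : spectrum ℂ b ⊆ Complex.ofReal '' s) : spectrum ℝ b ⊆ s := by
  rw [← spectrum.preimage_algebraMap ℂ]
  rintro x hx
  obtain ⟨y, hy, hyx⟩ := h hx
  exact (Complex.ofReal_injective hyx : y = x) ▸ hy

theorem dyadic_resolvent_semigroup_series
    {H : Type*} [NormedAddCommGroup H] [InnerProductSpace ℂ H] [CompleteSpace H]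
    (A : H →L[ℂ] H) (hA : IsSelfAdjoint A) (c : ℝ) (hc : 0 < c)
    (hspec : spectrum ℂ A ⊆ Complex.ofReal '' Set.Ici c)
    (T : ℝ → (H →L[ℂ] H)) (hT : ∀ t : ℝ, T t = NormedSpace.exp (-(t • A))) :
    Summable (fun j : ℕ => T ((j : ℝ) + 1)) ∧
    (∀ k : ℕ, Summable (fun j : ℕ => (((-1 : ℝ) ^ (j + 1)) / 2 ^ (k + 1)) • T (((j : ℝ) + 1) / 2 ^ (k + 1)))) ∧
    ∃ L : H →L[ℂ] H,
      Filter.Tendsto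
        (fun ℓ : ℕ => ∑ k ∈ Finset.range ℓ,
          ∑' j : ℕ, (((-1 : ℝ) ^ (j + 1)) / 2 ^ (k + 1)) • T (((j : ℝ) + 1) / 2 ^ (k + 1)))
        Filter.atTop (nhds L) ∧
      Ring.inverse A = (∑' j : ℕ, T ((j : ℝ) + 1)) - L := by
  obtain rfl : T = fun t => exp (-(t • A)) := funext hT
  have hspecR : spectrum ℝ A ⊆ Set.Ici c := spectrum_real_subset_of_subset_image_ofReal hspec
  have hdecay (t : ℝ) (ht : 0 < t) : ‖exp (-(t • A))‖ < 1 :=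
    (norm_exp_neg_smul_le_of_isSelfAdjoint hA hspecR ht.le).trans_lt
      (Real.exp_lt_one_iff.2 (by nlinarith))
  have hunit : IsUnit A := spectrum.isUnit_of_zero_notMem ℝ fun h0 => hc.not_ge (hspecR h0)
  set D := expRiemannSum A
  have hfirst : HasSum (fun j : ℕ => exp (-(((j : ℝ) + 1) • A))) (D 1) := by
    simpa using hasSum_expRiemannSum (hdecay 1 one_pos)
  have hlevel (k : ℕ) : HasSum (fun j : ℕ => (((-1 : ℝ) ^ (j + 1)) / 2 ^ (k + 1)) •
      exp (-((((j : ℝ) + 1) / 2 ^ (k + 1)) • A))) (D (2 ^ k)⁻¹ - D (2 ^ (k + 1))⁻¹) := by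
    have h2 : (2 : ℝ) * (2 ^ (k + 1))⁻¹ = (2 ^ k)⁻¹ := by rw [pow_succ]; field_simp
    simpa only [div_eq_mul_inv, h2] using
      hasSum_expRiemannSum_two_mul_sub (hdecay (2 ^ (k + 1))⁻¹ (by positivity))
  have hpartial (ℓ : ℕ) : ∑ k ∈ Finset.range ℓ, ∑' j : ℕ, (((-1 : ℝ) ^ (j + 1)) / 2 ^ (k + 1)) •
      exp (-((((j : ℝ) + 1) / 2 ^ (k + 1)) • A)) = D 1 - D (2 ^ ℓ)⁻¹ := by
    simp only [(hlevel _).tsum_eq, Finset.sum_range_sub' (fun k => D (2 ^ k)⁻¹), pow_zero, inv_one]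
  have hdyadic : Tendsto (fun ℓ : ℕ => ((2 : ℝ) ^ ℓ)⁻¹) atTop (𝓝[>] 0) :=
    tendsto_inv_atTop_nhdsGT_zero.comp (tendsto_pow_atTop_atTop_of_one_lt one_lt_two)
  refine ⟨hfirst.summable, fun k => (hlevel k).summable, D 1 - Ring.inverse A, ?_,
    by rw [hfirst.tsum_eq, sub_sub_cancel]⟩
  simpa only [hpartial, Function.comp_def] using
    ((tendsto_expRiemannSum hdecay hunit).comp hdyadic).const_sub (D 1)
end

section
/- For every natural number k, complex s, and z with 0 < |z| < 1, the k-th derivative of the polylogarithm satisfies d^k/dz^k Li_s(z) = z^{-k} ∑_{j=0}^k S1(k,j) Li_{s-j}(z), where S1(k,j) are the (signed) Stirling numbers of the first kind. -/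
noncomputable def polylog (s : ℂ) (z : ℂ) : ℂ :=
  ∑' n : ℕ, z ^ (n + 1) / ((n + 1 : ℕ) : ℂ) ^ s

/-- Signed Stirling numbers of the first kind. -/
def stirlingFirst : ℕ → ℕ → ℤ
  | 0, 0 => 1
  | 0, _ + 1 => 0
  | k + 1, 0 => -(k : ℤ) * stirlingFirst k 0
  | k + 1, j + 1 => -(k : ℤ) * stirlingFirst k (j + 1) + stirlingFirst k j

/-!
Differentiating the series termwise gives `z Li_s'(z) = Li_{s-1}(z)`. Hence the product rule turns
the derivative of `z^{-k} ∑_j S1(k,j) Li_{s-j}(z)` into `z^{-(k+1)}` times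
`-k ∑_j S1(k,j) Li_{s-j}(z) + ∑_j S1(k,j) Li_{s-j-1}(z)`, and by the recurrence
`S1(k+1,j) = -k S1(k,j) + S1(k,j-1)` this is `∑_j S1(k+1,j) Li_{s-j}(z)`.
-/

open Finset

theorem stirlingFirst_eq_zero_of_lt {k j : ℕ} (h : k < j) : stirlingFirst k j = 0 := by
  induction k generalizing j with
  | zero => obtain ⟨j, rfl⟩ := Nat.exists_eq_add_of_lt h; rfl
  | succ k ih =>
    obtain ⟨j, rfl⟩ : ∃ i, j = i + 1 := Nat.exists_eq_succ_of_ne_zero (by omega)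
    rw [stirlingFirst, ih (by omega), ih (by omega), mul_zero, add_zero]

theorem sum_range_stirlingFirst_succ_mul {R : Type*} [CommRing R] (k : ℕ) (f : ℕ → R) :
    ∑ j ∈ range (k + 2), (stirlingFirst (k + 1) j : R) * f j
      = -(k : R) * ∑ j ∈ range (k + 1), (stirlingFirst k j : R) * f j
        + ∑ j ∈ range (k + 1), (stirlingFirst k j : R) * f (j + 1) := by
  have htop : ∑ j ∈ range (k + 2), (stirlingFirst k j : R) * f j
      = ∑ j ∈ range (k + 1), (stirlingFirst k j : R) * f j := by
    rw [sum_range_succ, stirlingFirst_eq_zero_of_lt (Nat.lt_succ_self k), Int.cast_zero,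
      zero_mul, add_zero]
  have hsucc : ∀ j, (stirlingFirst (k + 1) (j + 1) : R)
      = -(k : R) * stirlingFirst k (j + 1) + stirlingFirst k j := by
    intro j; rw [stirlingFirst]; push_cast; ring
  have hzero : (stirlingFirst (k + 1) 0 : R) = -(k : R) * stirlingFirst k 0 := by
    rw [stirlingFirst]; push_cast; ring
  rw [← htop, sum_range_succ', sum_range_succ' (fun j ↦ (stirlingFirst k j : R) * f j)]
  simp only [hsucc, hzero, add_mul, sum_add_distrib, mul_add, mul_sum, mul_assoc]
  ring

theorem norm_polylog_term_le (s : ℂ) (n : ℕ) {w : ℂ} {r : ℝ} (hw : ‖w‖ ≤ r) :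
    ‖w ^ (n + 1) / ((n + 1 : ℕ) : ℂ) ^ s‖ ≤ ((n + 1 : ℕ) : ℝ) ^ ⌈-s.re⌉₊ * r ^ (n + 1) := by
  have hn : (1 : ℝ) ≤ ((n + 1 : ℕ) : ℝ) := by exact_mod_cast Nat.succ_pos n
  have hpow : ((n + 1 : ℕ) : ℝ) ^ (-s.re) ≤ ((n + 1 : ℕ) : ℝ) ^ ⌈-s.re⌉₊ := by
    rw [← Real.rpow_natCast]
    exact Real.rpow_le_rpow_of_exponent_le hn (Nat.le_ceil _)
  rw [norm_div, norm_pow, Complex.norm_natCast_cpow_of_pos n.succ_pos, div_eq_mul_inv,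
    ← Real.rpow_neg (by positivity), mul_comm]
  gcongr

theorem summable_natCast_succ_pow_mul_geometric (C : ℕ) {r : ℝ} (hr : |r| < 1) :
    Summable fun n : ℕ ↦ ((n + 1 : ℕ) : ℝ) ^ C * r ^ (n + 1) := by
  have h := summable_pow_mul_geometric_of_norm_lt_one (R := ℝ) C (by rwa [Real.norm_eq_abs])
  have := (summable_nat_add_iff (f := fun n : ℕ ↦ (n : ℝ) ^ C * r ^ n) 1).mpr h
  exact_mod_cast this

theorem hasDerivAt_polylog (s : ℂ) {z : ℂ} (hz0 : z ≠ 0) (hz : ‖z‖ < 1) :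
    HasDerivAt (polylog s) (polylog (s - 1) z / z) z := by
  -- Termwise differentiation, justified by a Weierstrass M-test on a disc `‖w‖ < r < 1`.
  obtain ⟨r, hzr, hr1⟩ := exists_between hz
  have hr0 : 0 ≤ r := (norm_nonneg z).trans hzr.le
  set F : ℕ → ℂ → ℂ := fun n w ↦ w ^ (n + 1) / ((n + 1 : ℕ) : ℂ) ^ s
  have hF : ∀ n, DifferentiableOn ℂ (F n) (Metric.ball 0 r) := fun n ↦
    ((differentiable_pow (n + 1)).div_const _).differentiableOn
  have hu := summable_natCast_succ_pow_mul_geometric ⌈-s.re⌉₊ (r := r) (by rwa [abs_of_nonneg hr0])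
  have hF_le : ∀ n, ∀ w ∈ Metric.ball (0 : ℂ) r, ‖F n w‖ ≤ _ := fun n w hw ↦
    norm_polylog_term_le s n (mem_ball_zero_iff.mp hw).le
  have hzU : z ∈ Metric.ball (0 : ℂ) r := mem_ball_zero_iff.mpr hzr
  have hdiff : DifferentiableAt ℂ (polylog s) z :=
    (Complex.differentiableOn_tsum_of_summable_norm hu hF Metric.isOpen_ball hF_le).differentiableAt
      (Metric.isOpen_ball.mem_nhds hzU)
  have hsum := Complex.hasSum_deriv_of_summable_norm hu hF Metric.isOpen_ball hF_le hzU
  have hterm : ∀ n, deriv (F n) z = z ^ (n + 1) / ((n + 1 : ℕ) : ℂ) ^ (s - 1) / z := by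
    intro n
    have hn : ((n + 1 : ℕ) : ℂ) ≠ 0 := Nat.cast_ne_zero.mpr n.succ_ne_zero
    rw [((hasDerivAt_pow (n + 1) z).div_const _).deriv, Complex.cpow_sub _ _ hn,
      Complex.cpow_one]
    field_simp
    push_cast
    ring
  suffices polylog (s - 1) z / z = deriv (polylog s) z from this ▸ hdiff.hasDerivAt
  have hderiv : deriv (polylog s) z = ∑' n, deriv (F n) z := hsum.tsum_eq.symm
  rw [hderiv, polylog, ← tsum_div_const]
  exact tsum_congr fun n ↦ (hterm n).symm

theorem hasDerivAt_zpow_mul_sum_stirlingFirst_polylog (k : ℕ) (s : ℂ) {z : ℂ} (hz0 : z ≠ 0)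
    (hz : ‖z‖ < 1) :
    HasDerivAt
      (fun w ↦ w ^ (-(k : ℤ)) * ∑ j ∈ range (k + 1), (stirlingFirst k j : ℂ) * polylog (s - j) w)
      (z ^ (-((k + 1 : ℕ) : ℤ)) *
        ∑ j ∈ range (k + 1 + 1), (stirlingFirst (k + 1) j : ℂ) * polylog (s - j) z) z := by
  have hsum : HasDerivAt
      (fun w ↦ ∑ j ∈ range (k + 1), (stirlingFirst k j : ℂ) * polylog (s - j) w)
      ((∑ j ∈ range (k + 1), (stirlingFirst k j : ℂ) * polylog (s - j - 1) z) / z) z := by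
    rw [sum_div]
    exact HasDerivAt.fun_sum fun j _ ↦ by
      simpa only [mul_div_assoc] using (hasDerivAt_polylog (s - j) hz0 hz).const_mul _
  refine ((hasDerivAt_zpow (-(k : ℤ)) z (Or.inl hz0)).mul hsum).congr_deriv ?_
  rw [sum_range_stirlingFirst_succ_mul k fun j ↦ polylog (s - j) z]
  simp only [Nat.cast_succ, ← sub_sub]
  rw [neg_add', zpow_sub_one₀ hz0]
  push_cast
  field_simp

theorem polylog_iteratedDeriv (k : ℕ) (s : ℂ) (z : ℂ)
    (hz0 : z ≠ 0) (hz : ‖z‖ < 1) :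
    iteratedDeriv k (polylog s) z
      = z ^ (-(k : ℤ)) *
          ∑ j ∈ Finset.range (k + 1), (stirlingFirst k j : ℂ) * polylog (s - j) z := by
  induction k generalizing z with
  | zero => simp [stirlingFirst]
  | succ k ih =>
    have hU : IsOpen {w : ℂ | w ≠ 0 ∧ ‖w‖ < 1} :=
      isOpen_ne.inter (isOpen_lt continuous_norm continuous_const)
    have hclosed : iteratedDeriv k (polylog s) =ᶠ[nhds z] fun w ↦
        w ^ (-(k : ℤ)) * ∑ j ∈ range (k + 1), (stirlingFirst k j : ℂ) * polylog (s - j) w :=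
      Filter.eventually_of_mem (hU.mem_nhds ⟨hz0, hz⟩) fun w hw ↦ ih w hw.1 hw.2
    rw [iteratedDeriv_succ, hclosed.deriv_eq]
    exact (hasDerivAt_zpow_mul_sum_stirlingFirst_polylog k s hz0 hz).deriv
end
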